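/- arXiv:1004.2156 — 5 statements merged into one kernel-verified Lean document; each statement's English description precedes it below -/
import Mathlib

section
/- Let k, P, n ∈ ℂ^3 and h = n₁² + n₂² + n₃² ≠ 0, d ∈ ℂ, and suppose that for i = 1,2,3 we have h·Mᵢ² = d²·Gᵢ², where (M₁,M₂,M₃) = k ∧ P and (G₁,G₂,G₃) = k ∧ n, and assume k₁k₂k₃ ≠ 0. Then there exists λ ∈ ℂ with Mᵢ = λ·Gᵢ for all i = 1,2,3; moreover λ² = d²/h. -/
private lemma aux_coherent (h d s k0 k1 k2 A B C U V W : ℂ)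
    (hs : s ^ 2 = h) (hh : h ≠ 0) (hd : d ≠ 0)
    (hk0 : k0 ≠ 0) (hk1 : k1 ≠ 0) (hk2 : k2 ≠ 0)
    (hM : k0 * A + k1 * B + k2 * C = 0) (hG : k0 * U + k1 * V + k2 * W = 0)
    (h1 : h * A ^ 2 = d ^ 2 * U ^ 2) (h2 : h * B ^ 2 = d ^ 2 * V ^ 2)
    (h3 : h * C ^ 2 = d ^ 2 * W ^ 2) :
    ∃ lam : ℂ, A = lam * U ∧ B = lam * V ∧ C = lam * W ∧ lam ^ 2 = d ^ 2 / h := by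
  have hs0 : s ≠ 0 := by
    intro h0; apply hh; rw [← hs, h0]; ring
  have hlam : (d / s) ^ 2 = d ^ 2 / h := by
    rw [div_pow, hs]
  have hlam' : (-(d / s)) ^ 2 = d ^ 2 / h := by
    rw [neg_pow, div_pow, hs]; ring
  have e1 : s * A = d * U ∨ s * A = -(d * U) := by
    have : (s * A - d * U) * (s * A + d * U) = 0 := by
      linear_combination A ^ 2 * hs + h1
    rcases mul_eq_zero.mp this with h' | h'
    · left; linear_combination h'
    · right; linear_combination h'
  have e2 : s * B = d * V ∨ s * B = -(d * V) := by
    have : (s * B - d * V) * (s * B + d * V) = 0 := by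
      linear_combination B ^ 2 * hs + h2
    rcases mul_eq_zero.mp this with h' | h'
    · left; linear_combination h'
    · right; linear_combination h'
  have e3 : s * C = d * W ∨ s * C = -(d * W) := by
    have : (s * C - d * W) * (s * C + d * W) = 0 := by
      linear_combination C ^ 2 * hs + h3
    rcases mul_eq_zero.mp this with h' | h'
    · left; linear_combination h'
    · right; linear_combination h'
  have key : ∀ X Y : ℂ, Y = 0 → h * X ^ 2 = d ^ 2 * Y ^ 2 → X = 0 := by
    intro X Y hY hXY
    have : h * X ^ 2 = 0 := by rw [hY] at hXY; simpa using hXY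
    have := (mul_eq_zero.mp this).resolve_left hh
    exact pow_eq_zero_iff (two_ne_zero) |>.mp this
  have hdk0 : (2 * d * k0) ≠ 0 := by
    have : (2 : ℂ) ≠ 0 := two_ne_zero
    exact mul_ne_zero (mul_ne_zero this hd) hk0
  have hdk1 : (2 * d * k1) ≠ 0 := by
    have : (2 : ℂ) ≠ 0 := two_ne_zero
    exact mul_ne_zero (mul_ne_zero this hd) hk1
  have hdk2 : (2 * d * k2) ≠ 0 := by
    have : (2 : ℂ) ≠ 0 := two_ne_zero
    exact mul_ne_zero (mul_ne_zero this hd) hk2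
  rcases e1 with a | a <;> rcases e2 with b | b <;> rcases e3 with c | c
  · -- +++
    refine ⟨d / s, ?_, ?_, ?_, hlam⟩ <;> field_simp <;>
      [linear_combination a; linear_combination b; linear_combination c]
  · -- ++-
    have hW : W = 0 := by
      have h0 : (2 * d * k2) * W = 0 := by
        linear_combination k0 * a + k1 * b + k2 * c + d * hG - s * hM
      exact (mul_eq_zero.mp h0).resolve_left hdk2
    have hC : C = 0 := key C W hW h3
    refine ⟨d / s, ?_, ?_, ?_, hlam⟩
    · field_simp; linear_combination a
    · field_simp; linear_combination b
    · rw [hC, hW]; ring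
  · -- +-+
    have hV : V = 0 := by
      have h0 : (2 * d * k1) * V = 0 := by
        linear_combination k0 * a + k1 * b + k2 * c + d * hG - s * hM
      exact (mul_eq_zero.mp h0).resolve_left hdk1
    have hB : B = 0 := key B V hV h2
    refine ⟨d / s, ?_, ?_, ?_, hlam⟩
    · field_simp; linear_combination a
    · rw [hB, hV]; ring
    · field_simp; linear_combination c
  · -- +--
    have hU : U = 0 := by
      have h0 : (2 * d * k0) * U = 0 := by
        linear_combination d * hG - k0 * a - k1 * b - k2 * c + s * hM
      exact (mul_eq_zero.mp h0).resolve_left hdk0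
    have hA : A = 0 := key A U hU h1
    refine ⟨-(d / s), ?_, ?_, ?_, hlam'⟩
    · rw [hA, hU]; ring
    · field_simp; linear_combination b
    · field_simp; linear_combination c
  · -- -++
    have hU : U = 0 := by
      have h0 : (2 * d * k0) * U = 0 := by
        linear_combination k0 * a + k1 * b + k2 * c + d * hG - s * hM
      exact (mul_eq_zero.mp h0).resolve_left hdk0
    have hA : A = 0 := key A U hU h1
    refine ⟨d / s, ?_, ?_, ?_, hlam⟩
    · rw [hA, hU]; ring
    · field_simp; linear_combination b
    · field_simp; linear_combination c
  · -- -+-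
    have hV : V = 0 := by
      have h0 : (2 * d * k1) * V = 0 := by
        linear_combination -(k0 * a) - k1 * b - k2 * c + d * hG + s * hM
      exact (mul_eq_zero.mp h0).resolve_left hdk1
    have hB : B = 0 := key B V hV h2
    refine ⟨-(d / s), ?_, ?_, ?_, hlam'⟩
    · field_simp; linear_combination a
    · rw [hB, hV]; ring
    · field_simp; linear_combination c
  · -- --+
    have hW : W = 0 := by
      have h0 : (2 * d * k2) * W = 0 := by
        linear_combination -(k0 * a) - k1 * b - k2 * c + d * hG + s * hM
      exact (mul_eq_zero.mp h0).resolve_left hdk2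
    have hC : C = 0 := key C W hW h3
    refine ⟨-(d / s), ?_, ?_, ?_, hlam'⟩
    · field_simp; linear_combination a
    · field_simp; linear_combination b
    · rw [hC, hW]; ring
  · -- ---
    refine ⟨-(d / s), ?_, ?_, ?_, hlam'⟩ <;> field_simp <;>
      [linear_combination a; linear_combination b; linear_combination c]

/-- Let `k, P, n ∈ ℂ³`, `h = n₁²+n₂²+n₃² ≠ 0`, `d ∈ ℂ`,
`(M₁,M₂,M₃) = k ∧ P`, `(G₁,G₂,G₃) = k ∧ n`.  If `h·Mᵢ² = d²·Gᵢ²` for `i = 1,2,3`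
and `k₁k₂k₃ ≠ 0`, then there is `λ ∈ ℂ` with `Mᵢ = λGᵢ` for all `i`,
and moreover `λ² = d²/h`. -/
theorem coherent_sign_choice (k P n : Fin 3 → ℂ) (d : ℂ)
    (hh : n 0 ^ 2 + n 1 ^ 2 + n 2 ^ 2 ≠ 0)
    (hk : k 0 * k 1 * k 2 ≠ 0)
    (h1 : (n 0 ^ 2 + n 1 ^ 2 + n 2 ^ 2) * (k 1 * P 2 - k 2 * P 1) ^ 2
        = d ^ 2 * (k 1 * n 2 - k 2 * n 1) ^ 2)
    (h2 : (n 0 ^ 2 + n 1 ^ 2 + n 2 ^ 2) * (k 2 * P 0 - k 0 * P 2) ^ 2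
        = d ^ 2 * (k 2 * n 0 - k 0 * n 2) ^ 2)
    (h3 : (n 0 ^ 2 + n 1 ^ 2 + n 2 ^ 2) * (k 0 * P 1 - k 1 * P 0) ^ 2
        = d ^ 2 * (k 0 * n 1 - k 1 * n 0) ^ 2) :
    ∃ lam : ℂ,
      (k 1 * P 2 - k 2 * P 1 = lam * (k 1 * n 2 - k 2 * n 1)) ∧
      (k 2 * P 0 - k 0 * P 2 = lam * (k 2 * n 0 - k 0 * n 2)) ∧
      (k 0 * P 1 - k 1 * P 0 = lam * (k 0 * n 1 - k 1 * n 0)) ∧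
      lam ^ 2 = d ^ 2 / (n 0 ^ 2 + n 1 ^ 2 + n 2 ^ 2) := by
  by_cases hd : d = 0
  · subst hd
    refine ⟨0, ?_, ?_, ?_, by simp⟩
    · have : (n 0 ^ 2 + n 1 ^ 2 + n 2 ^ 2) * (k 1 * P 2 - k 2 * P 1) ^ 2 = 0 := by
        rw [h1]; ring
      have := (mul_eq_zero.mp this).resolve_left hh
      have := pow_eq_zero_iff (two_ne_zero) |>.mp this
      rw [this]; ring
    · have : (n 0 ^ 2 + n 1 ^ 2 + n 2 ^ 2) * (k 2 * P 0 - k 0 * P 2) ^ 2 = 0 := by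
        rw [h2]; ring
      have := (mul_eq_zero.mp this).resolve_left hh
      have := pow_eq_zero_iff (two_ne_zero) |>.mp this
      rw [this]; ring
    · have : (n 0 ^ 2 + n 1 ^ 2 + n 2 ^ 2) * (k 0 * P 1 - k 1 * P 0) ^ 2 = 0 := by
        rw [h3]; ring
      have := (mul_eq_zero.mp this).resolve_left hh
      have := pow_eq_zero_iff (two_ne_zero) |>.mp this
      rw [this]; ring
  · obtain ⟨s, hs⟩ := IsAlgClosed.exists_pow_nat_eq (n 0 ^ 2 + n 1 ^ 2 + n 2 ^ 2)
      (n := 2) (by norm_num)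
    have hk0 : k 0 ≠ 0 := fun h0 => hk (by rw [h0]; ring)
    have hk1 : k 1 ≠ 0 := fun h0 => hk (by rw [h0]; ring)
    have hk2 : k 2 ≠ 0 := fun h0 => hk (by rw [h0]; ring)
    exact aux_coherent _ d s (k 0) (k 1) (k 2) _ _ _ _ _ _ hs hh hd hk0 hk1 hk2
      (by ring) (by ring) h1 h2 h3
end

section
/- Let F₀, F₁, …, F_m be homogeneous polynomials in variables (t₀,t₁,t₂) over ℂ such that each F₁,…,F_m has positive degree in t₀, all of F₁,…,F_m have the same total degree, and gcd(F₁,…,F_m) = 1. Set F(c, t) = c₁F₁ + ⋯ + c_mF_m with new indeterminates c = (c₁,…,c_m), and R(c, t₁, t₂) = Res_{t₀}(F₀, F). If (t₁⁰,t₂⁰) ∈ ℂ² \ {0} is a common zero of the content Cont_c(R) such that the leading coefficients of F₀ and F with respect to t₀ do not vanish at (t₁⁰,t₂⁰), then there exists t₀⁰ ∈ ℂ with Fᵢ(t₀⁰,t₁⁰,t₂⁰) = 0 for all i = 0,…,m. -/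
/-! Specialising `(t₁, t₂) ↦ tv` kills every `c`-coefficient of `R = Res_{t₀}(F₀, F)`, since
they are all multiples of the content. The `t₀`-leading coefficients survive the specialisation,
so the resultant commutes with it: `Res_{t₀}(f₀, F(c, t₀, tv)) = 0` in `ℂ[c]`, where
`f₀ = F₀(t₀, tv) ∈ ℂ[t₀]`. Since `f₀` splits, this resultant is
`lc(f₀)ⁿ ∏_{f₀(z) = 0} F(c, z, tv)`, and `ℂ[c]` is a domain, so some root `z` of `f₀` makes
`F(c, z, tv) = ∑ cᵢ Fᵢ(z, tv)` vanish identically in `c`, i.e. `Fᵢ(z, tv) = 0` for all `i`. -/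

open Polynomial

/-- The Sylvester matrix of two polynomials. -/
noncomputable def sylvesterMatrix {R : Type*} [CommRing R] (f g : Polynomial R) :
    Matrix (Fin (f.natDegree + g.natDegree)) (Fin (f.natDegree + g.natDegree)) R :=
  Matrix.of fun i j =>
    if (i : ℕ) < g.natDegree then
      (if (i : ℕ) ≤ (j : ℕ) ∧ (j : ℕ) ≤ (i : ℕ) + f.natDegree then
        f.coeff (f.natDegree + i - j) else 0)
    else
      (if (i : ℕ) - g.natDegree ≤ (j : ℕ) ∧ (j : ℕ) ≤ ((i : ℕ) - g.natDegree) + g.natDegree then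
        g.coeff (g.natDegree + ((i : ℕ) - g.natDegree) - j) else 0)

/-- The resultant of two polynomials, as the determinant of their Sylvester matrix. -/
noncomputable def resultant {R : Type*} [CommRing R] (f g : Polynomial R) : R :=
  (sylvesterMatrix f g).det

/-- The resultant with respect to `t₀` of two polynomials in `R[t₀,…,t_n]`. -/
noncomputable def resT0 {R : Type*} [CommRing R] {n : ℕ} (F G : MvPolynomial (Fin (n + 1)) R) :
    MvPolynomial (Fin n) R :=
  _root_.resultant (MvPolynomial.finSuccEquiv R n F) (MvPolynomial.finSuccEquiv R n G)

/-- The generic linear combination `F(c,t) = c₁F₁ + ⋯ + c_mF_m`, an element of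
`(ℂ[c₁,…,c_m])[t₀,t₁,t₂]`. -/
noncomputable def genericComb (m : ℕ) (F : Fin (m + 1) → MvPolynomial (Fin 3) ℂ) :
    MvPolynomial (Fin 3) (MvPolynomial (Fin m) ℂ) :=
  ∑ i : Fin m,
    (MvPolynomial.C (MvPolynomial.X i) : MvPolynomial (Fin 3) (MvPolynomial (Fin m) ℂ)) *
      MvPolynomial.map (MvPolynomial.C : ℂ →+* MvPolynomial (Fin m) ℂ) (F i.succ)

/-- The coefficient, as a polynomial in `ℂ[t₁,t₂]`, of the monomial `c^e` in a
polynomial of `(ℂ[c₁,…,c_m])[t₁,t₂]`. -/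
noncomputable def cCoeff {m : ℕ} (e : Fin m →₀ ℕ)
    (P : MvPolynomial (Fin 2) (MvPolynomial (Fin m) ℂ)) : MvPolynomial (Fin 2) ℂ :=
  P.support.sum fun μ => MvPolynomial.monomial μ (MvPolynomial.coeff e (MvPolynomial.coeff μ P))

theorem sylvesterMatrix_eq_submatrix_transpose_sylvester {R : Type*} [CommRing R] (f g : R[X]) :
    sylvesterMatrix f g =
      (sylvester f g f.natDegree g.natDegree).transpose.submatrix Fin.rev Fin.rev := by
  ext i j
  simp only [sylvesterMatrix, sylvester, Matrix.submatrix_apply, Matrix.transpose_apply,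
    Matrix.of_apply, Fin.addCases, Fin.val_rev, eq_rec_constant, Fin.val_castLT, Fin.val_subNat,
    Fin.val_cast, Set.mem_Icc]
  have := i.isLt
  have := j.isLt
  split_ifs <;> first | omega | rfl | (congr 1; omega)

theorem resultant_eq_polynomial_resultant {R : Type*} [CommRing R] (f g : R[X]) :
    _root_.resultant f g = Polynomial.resultant f g := by
  rw [_root_.resultant, sylvesterMatrix_eq_submatrix_transpose_sylvester, Polynomial.resultant]
  exact (Matrix.det_submatrix_equiv_self Fin.revPerm _).trans (Matrix.det_transpose _)

namespace Polynomial

theorem resultant_map_of_leadingCoeff_ne_zero {R S : Type*} [CommRing R] [CommRing S]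
    (φ : R →+* S) {f g : R[X]} (hf : φ f.leadingCoeff ≠ 0) (hg : φ g.leadingCoeff ≠ 0) :
    (f.map φ).resultant (g.map φ) = φ (f.resultant g) := by
  rw [natDegree_map_of_leadingCoeff_ne_zero φ hf, natDegree_map_of_leadingCoeff_ne_zero φ hg,
    resultant_map_map]

theorem exists_isRoot_eval_eq_zero_of_resultant_map_eq_zero {K A : Type*} [Field K]
    [IsAlgClosed K] [CommRing A] [IsDomain A] (φ : K →+* A) {f : K[X]} (hf : f ≠ 0) {g : A[X]}
    (h : (f.map φ).resultant g = 0) : ∃ z, f.IsRoot z ∧ g.eval (φ z) = 0 := by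
  have hsplit : f.Splits := IsAlgClosed.splits f
  rw [resultant_eq_prod_eval _ _ _ le_rfl (hsplit.map φ), hsplit.roots_map φ, Multiset.map_map,
    mul_eq_zero, leadingCoeff_map, or_iff_right (pow_ne_zero _ (by simpa using hf)),
    Multiset.prod_eq_zero_iff, Multiset.mem_map] at h
  obtain ⟨z, hz, hgz⟩ := h
  exact ⟨z, (mem_roots hf).mp hz, hgz⟩

end Polynomial

namespace MvPolynomial

theorem finSuccEquiv_map {R S : Type*} [CommSemiring R] [CommSemiring S] (φ : R →+* S) {n : ℕ}
    (P : MvPolynomial (Fin (n + 1)) R) :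
    finSuccEquiv S n (map φ P) = (finSuccEquiv R n P).map (map φ) := by
  suffices ((finSuccEquiv S n).toRingHom.comp (map φ)) =
      (Polynomial.mapRingHom (map φ)).comp (finSuccEquiv R n).toRingHom from
    RingHom.congr_fun this P
  refine ringHom_ext (fun r => by simp [finSuccEquiv_apply]) (Fin.cases ?_ fun i => ?_) <;>
    simp [finSuccEquiv_X_zero, finSuccEquiv_X_succ]

theorem eval_C_comp_map_C {R σ τ : Type*} [CommSemiring R] (s : σ → R) (P : MvPolynomial σ R) :
    eval (fun i => (C (s i) : MvPolynomial τ R)) (map C P) = C (eval s P) := by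
  rw [eval_map]
  exact (eval₂_comp_left _ (RingHom.id R) s P).symm

theorem sum_C_mul_X_eq_zero_iff {R σ : Type*} [CommRing R] [Fintype σ] (a : σ → R) :
    ∑ i, C (a i) * X i = (0 : MvPolynomial σ R) ↔ a = 0 := by
  simp only [C_mul']
  rw [_root_.funext_iff]
  exact ⟨Fintype.linearIndependent_iff.mp (linearIndependent_X σ R) a, fun h => by simp [h]⟩

end MvPolynomial

theorem coeff_eval_C_eq_eval_cCoeff {m : ℕ} (tv : Fin 2 → ℂ)
    (P : MvPolynomial (Fin 2) (MvPolynomial (Fin m) ℂ)) (e : Fin m →₀ ℕ) :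
    (MvPolynomial.eval (fun i => MvPolynomial.C (tv i)) P).coeff e =
      MvPolynomial.eval tv (cCoeff e P) := by
  conv_lhs => rw [P.as_sum]
  simp only [cCoeff, map_sum, MvPolynomial.eval_monomial, MvPolynomial.coeff_sum]
  refine Finset.sum_congr rfl fun μ _ => ?_
  simp only [← map_pow, ← map_finsuppProd]
  rw [mul_comm, MvPolynomial.coeff_C_mul, mul_comm]

theorem eval_C_eq_zero_of_dvd_cCoeff {m : ℕ} {tv : Fin 2 → ℂ} {g : MvPolynomial (Fin 2) ℂ}
    {P : MvPolynomial (Fin 2) (MvPolynomial (Fin m) ℂ)} (hdvd : ∀ e, g ∣ cCoeff e P)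
    (hg : MvPolynomial.eval tv g = 0) :
    MvPolynomial.eval (fun i => MvPolynomial.C (tv i)) P = 0 := by
  ext e
  obtain ⟨q, hq⟩ := hdvd e
  rw [coeff_eval_C_eq_eval_cCoeff, hq, map_mul, hg, zero_mul, MvPolynomial.coeff_zero]

theorem eval_C_genericComb (m : ℕ) (F : Fin (m + 1) → MvPolynomial (Fin 3) ℂ) (x : Fin 3 → ℂ) :
    MvPolynomial.eval (fun i => MvPolynomial.C (x i)) (genericComb m F) =
      ∑ i : Fin m, MvPolynomial.C (MvPolynomial.eval x (F i.succ)) * MvPolynomial.X i := by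
  simp only [genericComb, map_sum, map_mul, MvPolynomial.eval_C, MvPolynomial.eval_C_comp_map_C,
    mul_comm]

theorem eval_map_finSuccEquiv_genericComb_eq_zero_iff (m : ℕ)
    (F : Fin (m + 1) → MvPolynomial (Fin 3) ℂ) (tv : Fin 2 → ℂ) (z : ℂ) :
    ((MvPolynomial.finSuccEquiv _ 2 (genericComb m F)).map
        (MvPolynomial.eval fun i => MvPolynomial.C (tv i))).eval (MvPolynomial.C z) = 0 ↔
      ∀ i : Fin m, MvPolynomial.eval (Fin.cons z tv) (F i.succ) = 0 := by
  rw [← MvPolynomial.eval_eq_eval_mv_eval', ← Function.comp_def MvPolynomial.C tv,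
    ← Fin.comp_cons, Function.comp_def, eval_C_genericComb, MvPolynomial.sum_C_mul_X_eq_zero_iff,
    _root_.funext_iff]
  rfl

theorem generalized_resultant_intersection_general (m : ℕ)
    (F : Fin (m + 1) → MvPolynomial (Fin 3) ℂ)
    (tv : Fin 2 → ℂ)
    -- `g` is the content of `R = Res_{t₀}(F₀, F(c,·))` with respect to the `c`-variables:
    (g : MvPolynomial (Fin 2) ℂ)
    (hgdvd : ∀ e : Fin m →₀ ℕ,
      g ∣ cCoeff e (resT0 (MvPolynomial.map (MvPolynomial.C : ℂ →+* MvPolynomial (Fin m) ℂ) (F 0))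
            (genericComb m F)))
    (hgzero : MvPolynomial.eval tv g = 0)
    -- the leading coefficients w.r.t. `t₀` of `F₀` and of `F(c,·)` do not vanish at `tv`:
    (hlc0 : MvPolynomial.eval tv (MvPolynomial.finSuccEquiv ℂ 2 (F 0)).leadingCoeff ≠ 0)
    (hlcF : MvPolynomial.eval₂ (RingHom.id (MvPolynomial (Fin m) ℂ))
        (fun i => (MvPolynomial.C (tv i) : MvPolynomial (Fin m) ℂ))
        (MvPolynomial.finSuccEquiv (MvPolynomial (Fin m) ℂ) 2 (genericComb m F)).leadingCoeff
        ≠ 0) :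
    ∃ z : ℂ, ∀ i : Fin (m + 1), MvPolynomial.eval (Fin.cons z tv) (F i) = 0 := by
  set ψ : MvPolynomial (Fin 2) (MvPolynomial (Fin m) ℂ) →+* MvPolynomial (Fin m) ℂ :=
    MvPolynomial.eval fun i => MvPolynomial.C (tv i)
  set P₀ := MvPolynomial.finSuccEquiv ℂ 2 (F 0)
  set f₀ := P₀.map (MvPolynomial.eval tv)
  have hQ₀ : (MvPolynomial.finSuccEquiv _ 2 (MvPolynomial.map MvPolynomial.C (F 0))).map ψ =
      f₀.map MvPolynomial.C := by
    rw [MvPolynomial.finSuccEquiv_map, Polynomial.map_map, Polynomial.map_map]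
    congr 1
    exact RingHom.ext (MvPolynomial.eval_C_comp_map_C tv)
  have hlcQ₀ : ψ (MvPolynomial.finSuccEquiv _ 2
      (MvPolynomial.map MvPolynomial.C (F 0))).leadingCoeff ≠ 0 := by
    rw [MvPolynomial.finSuccEquiv_map, leadingCoeff_map_of_injective
      (MvPolynomial.map_injective _ (MvPolynomial.C_injective _ _))]
    rwa [MvPolynomial.eval_C_comp_map_C, Ne, MvPolynomial.C_eq_zero]
  have hres : (f₀.map MvPolynomial.C).resultant
      ((MvPolynomial.finSuccEquiv _ 2 (genericComb m F)).map ψ) = 0 := by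
    rw [← hQ₀, resultant_map_of_leadingCoeff_ne_zero ψ hlcQ₀ hlcF,
      ← resultant_eq_polynomial_resultant]
    exact eval_C_eq_zero_of_dvd_cCoeff hgdvd hgzero
  have hf₀ : f₀ ≠ 0 :=
    leadingCoeff_ne_zero.mp (by rwa [leadingCoeff_map_of_leadingCoeff_ne_zero _ hlc0])
  obtain ⟨z, hz₀, hzF⟩ := exists_isRoot_eval_eq_zero_of_resultant_map_eq_zero _ hf₀ hres
  rw [eval_map_finSuccEquiv_genericComb_eq_zero_iff] at hzF
  refine ⟨z, Fin.cases ?_ hzF⟩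
  rw [MvPolynomial.eval_eq_eval_mv_eval']
  exact hz₀

/-- generalized resultants: with `F₀,…,F_m` homogeneous,
`F₁,…,F_m` of positive degree in `t₀`, of equal total degree, and with trivial gcd,
set `F = ∑ cᵢFᵢ` and `R = Res_{t₀}(F₀,F)`.  If `(t₁⁰,t₂⁰) ≠ 0` is a zero of the
content `Cont_c(R)` where the `t₀`-leading coefficients of `F₀` and `F` do not vanish,
then there is `t₀⁰` with `Fᵢ(t₀⁰,t₁⁰,t₂⁰) = 0` for all `i = 0,…,m`. -/
theorem generalized_resultant_intersection (m : ℕ)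
    (F : Fin (m + 1) → MvPolynomial (Fin 3) ℂ)
    (degF : Fin (m + 1) → ℕ)
    (hhom : ∀ i, (F i).IsHomogeneous (degF i))
    (N : ℕ) (hsame : ∀ i : Fin (m + 1), i ≠ 0 → degF i = N)
    (hpos : ∀ i : Fin (m + 1), i ≠ 0 → 0 < (F i).degreeOf 0)
    (hgcd : ∀ D : MvPolynomial (Fin 3) ℂ, (∀ i : Fin (m + 1), i ≠ 0 → D ∣ F i) → IsUnit D)
    (tv : Fin 2 → ℂ) (htv : tv ≠ 0)
    -- `g` is the content of `R = Res_{t₀}(F₀, F(c,·))` with respect to the `c`-variables: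
    (g : MvPolynomial (Fin 2) ℂ)
    (hgdvd : ∀ e : Fin m →₀ ℕ,
      g ∣ cCoeff e (resT0 (MvPolynomial.map (MvPolynomial.C : ℂ →+* MvPolynomial (Fin m) ℂ) (F 0))
            (genericComb m F)))
    (hgmax : ∀ D : MvPolynomial (Fin 2) ℂ,
      (∀ e : Fin m →₀ ℕ,
        D ∣ cCoeff e (resT0 (MvPolynomial.map (MvPolynomial.C : ℂ →+* MvPolynomial (Fin m) ℂ)
              (F 0)) (genericComb m F))) → D ∣ g)
    (hgzero : MvPolynomial.eval tv g = 0)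
    -- the leading coefficients w.r.t. `t₀` of `F₀` and of `F(c,·)` do not vanish at `tv`:
    (hlc0 : MvPolynomial.eval tv (MvPolynomial.finSuccEquiv ℂ 2 (F 0)).leadingCoeff ≠ 0)
    (hlcF : MvPolynomial.eval₂ (RingHom.id (MvPolynomial (Fin m) ℂ))
        (fun i => (MvPolynomial.C (tv i) : MvPolynomial (Fin m) ℂ))
        (MvPolynomial.finSuccEquiv (MvPolynomial (Fin m) ℂ) 2 (genericComb m F)).leadingCoeff
        ≠ 0) :
    ∃ z : ℂ, ∀ i : Fin (m + 1), MvPolynomial.eval (Fin.cons z tv) (F i) = 0 :=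
  generalized_resultant_intersection_general m F tv g hgdvd hgzero hlc0 hlcF
end

section
/- Let S₁, S₂, S₃ ∈ ℂ[d,k₁,k₂,k₃][t₀,t₁,t₂] be defined (with H, X, Y, Z, W, N₁, N₂, N₃ ∈ ℂ[t₀,t₁,t₂]) by S₁ = H(k₂Z - k₃Y)² - d²W²(k₂N₃ - k₃N₂)², S₂ = H(k₁Z - k₃X)² - d²W²(k₁N₃ - k₃N₁)², S₃ = H(k₁Y - k₂X)² - d²W²(k₁N₂ - k₂N₁)². If gcd(N₁,N₂,N₃) = 1 and gcd(X,Y,Z,W) = 1, then for S = c₁S₁ + c₂S₂ + c₃S₃ (with new indeterminates c₁,c₂,c₃), the content of S with respect to the variables (c,d,k) equals gcd(H, W²) in ℂ[t₀,t₁,t₂]. -/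
/-- Base ring `ℂ[t₀,t₁,t₂]`. -/
abbrev TRing : Type := MvPolynomial (Fin 3) ℂ

/-- The ring `ℂ[t₀,t₁,t₂][c₁,c₂,c₃,d,k₁,k₂,k₃]`: variables `0,1,2` are `c₁,c₂,c₃`,
variable `3` is `d`, and variables `4,5,6` are `k₁,k₂,k₃`. -/
abbrev BigRing : Type := MvPolynomial (Fin 7) TRing

open MvPolynomial in
/-- `S₁ = H(k₂Z - k₃Y)² - d²W²(k₂N₃ - k₃N₂)²`. -/
noncomputable def S₁ (H Y Z W N₂ N₃ : TRing) : BigRing :=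
  C H * (X 5 * C Z - X 6 * C Y) ^ 2 - (X 3) ^ 2 * C (W ^ 2) * (X 5 * C N₃ - X 6 * C N₂) ^ 2

open MvPolynomial in
/-- `S₂ = H(k₁Z - k₃X)² - d²W²(k₁N₃ - k₃N₁)²`. -/
noncomputable def S₂ (H Xp Z W N₁ N₃ : TRing) : BigRing :=
  C H * (X 4 * C Z - X 6 * C Xp) ^ 2 - (X 3) ^ 2 * C (W ^ 2) * (X 4 * C N₃ - X 6 * C N₁) ^ 2

open MvPolynomial in
/-- `S₃ = H(k₁Y - k₂X)² - d²W²(k₁N₂ - k₂N₁)²`. -/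
noncomputable def S₃ (H Xp Y W N₁ N₂ : TRing) : BigRing :=
  C H * (X 4 * C Y - X 5 * C Xp) ^ 2 - (X 3) ^ 2 * C (W ^ 2) * (X 4 * C N₂ - X 5 * C N₁) ^ 2

open MvPolynomial in
/-- `S = c₁S₁ + c₂S₂ + c₃S₃`. -/
noncomputable def Sgen (H Xp Y Z W N₁ N₂ N₃ : TRing) : BigRing :=
  X 0 * S₁ H Y Z W N₂ N₃ + X 1 * S₂ H Xp Z W N₁ N₃ + X 2 * S₃ H Xp Y W N₁ N₂

/-!
`H` and `W²` divide every `Sᵢ` coefficientwise, which gives one direction. Conversely, specialising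
`c` to a unit vector, one `k` to `1` and the others to `0`, and `d` to `0` or `1` shows that a
common divisor `D` of the coefficients divides `H X²`, `H Y²`, `H Z²` and `W² N₁²`, `W² N₂²`,
`W² N₃²`. Peeling off the prime factors of `D` one at a time, a common divisor of all `w aᵢⁿ` for a
jointly coprime family `(aᵢ)` divides `w`. This gives `D ∣ W²`, and then, as also `D ∣ H W²`,
`D ∣ H`.
-/

open MvPolynomial

theorem dvd_of_forall_dvd_mul_pow {α ι : Type*} [CommMonoidWithZero α]
    [UniqueFactorizationMonoid α] {a : ι → α} (ha : ∀ e, (∀ i, e ∣ a i) → IsUnit e) (n : ℕ)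
    {D w : α} (h : ∀ i, D ∣ w * a i ^ n) : D ∣ w := by
  cases subsingleton_or_nontrivial α
  · exact Subsingleton.elim w 0 ▸ dvd_zero D
  induction D using UniqueFactorizationMonoid.induction_on_prime generalizing w with
  | h₁ =>
    obtain rfl | hw := eq_or_ne w 0
    · exact dvd_rfl
    refine absurd (ha 0 fun i => ?_) not_isUnit_zero
    obtain ⟨hai, -⟩ :=
      pow_eq_zero_iff'.mp ((mul_eq_zero.mp (zero_dvd_iff.mp (h i))).resolve_left hw)
    exact hai ▸ dvd_rfl
  | h₂ u hu => exact hu.dvd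
  | h₃ D p _ hp ih =>
    obtain ⟨j, hj⟩ : ∃ j, ¬ p ∣ a j := by
      by_contra! hall
      exact hp.not_isUnit (ha p hall)
    obtain ⟨w', rfl⟩ : p ∣ w :=
      (hp.dvd_or_dvd ((dvd_mul_right p D).trans (h j))).resolve_right
        fun hpa => hj (hp.dvd_of_dvd_pow hpa)
    refine mul_dvd_mul_left p (ih fun i => ?_)
    exact (mul_dvd_mul_iff_left hp.ne_zero).mp (mul_assoc p w' (a i ^ n) ▸ h i)

theorem dvd_and_dvd_of_forall_dvd_sub_sq_mul {R : Type*} [CommRing R] {D a b : R}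
    (h : ∀ δ : R, D ∣ a - δ ^ 2 * b) : D ∣ a ∧ D ∣ b := by
  have ha : D ∣ a := by simpa using h 0
  exact ⟨ha, by simpa using (dvd_sub_right ha).mp (h 1)⟩

section Sgen

variable (H Xp Y Z W N₁ N₂ N₃ : TRing)

theorem eval_Sgen_c₁_k₂ (δ : TRing) :
    eval ![1, 0, 0, δ, 0, 1, 0] (Sgen H Xp Y Z W N₁ N₂ N₃) =
      H * Z ^ 2 - δ ^ 2 * (W ^ 2 * N₃ ^ 2) := by
  simp only [Sgen, S₁, S₂, S₃, map_add, map_mul, map_sub, map_pow, eval_X, eval_C,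
    Matrix.cons_val, Matrix.cons_val_zero, Matrix.cons_val_one]
  ring

theorem eval_Sgen_c₁_k₃ (δ : TRing) :
    eval ![1, 0, 0, δ, 0, 0, 1] (Sgen H Xp Y Z W N₁ N₂ N₃) =
      H * Y ^ 2 - δ ^ 2 * (W ^ 2 * N₂ ^ 2) := by
  simp only [Sgen, S₁, S₂, S₃, map_add, map_mul, map_sub, map_pow, eval_X, eval_C,
    Matrix.cons_val, Matrix.cons_val_zero, Matrix.cons_val_one]
  ring

theorem eval_Sgen_c₂_k₃ (δ : TRing) :
    eval ![0, 1, 0, δ, 0, 0, 1] (Sgen H Xp Y Z W N₁ N₂ N₃) =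
      H * Xp ^ 2 - δ ^ 2 * (W ^ 2 * N₁ ^ 2) := by
  simp only [Sgen, S₁, S₂, S₃, map_add, map_mul, map_sub, map_pow, eval_X, eval_C,
    Matrix.cons_val, Matrix.cons_val_zero, Matrix.cons_val_one]
  ring

theorem C_dvd_Sgen {D : TRing} (hH : D ∣ H) (hW : D ∣ W ^ 2) :
    C D ∣ Sgen H Xp Y Z W N₁ N₂ N₃ := by
  have hCH : (C D : BigRing) ∣ C H := map_dvd C hH
  have hCW : (C D : BigRing) ∣ C (W ^ 2) := map_dvd C hW
  unfold Sgen S₁ S₂ S₃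
  refine dvd_add (dvd_add (dvd_mul_of_dvd_right ?_ _) (dvd_mul_of_dvd_right ?_ _))
    (dvd_mul_of_dvd_right ?_ _) <;>
  exact dvd_sub (hCH.mul_right _) ((hCW.mul_left _).mul_right _)

end Sgen

/-- if `gcd(N₁,N₂,N₃) = 1` and `gcd(X,Y,Z,W) = 1`, then the content of
`S = c₁S₁ + c₂S₂ + c₃S₃` with respect to the variables `(c,d,k)` equals `gcd(H, W²)`
in `ℂ[t₀,t₁,t₂]`; equivalently, a polynomial `D` divides all the `(c,d,k)`-coefficients
of `S` if and only if it divides both `H` and `W²`. -/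
theorem content_of_auxiliary_combination (H Xp Y Z W N₁ N₂ N₃ : TRing)
    (hN : ∀ D : TRing, D ∣ N₁ → D ∣ N₂ → D ∣ N₃ → IsUnit D)
    (hXYZW : ∀ D : TRing, D ∣ Xp → D ∣ Y → D ∣ Z → D ∣ W → IsUnit D) :
    ∀ D : TRing,
      (∀ e : Fin 7 →₀ ℕ, D ∣ MvPolynomial.coeff e (Sgen H Xp Y Z W N₁ N₂ N₃)) ↔
        (D ∣ H ∧ D ∣ W ^ 2) := by
  intro D
  rw [← C_dvd_iff_dvd_coeff]
  refine ⟨fun hD => ?_, fun ⟨hH, hW⟩ => C_dvd_Sgen H Xp Y Z W N₁ N₂ N₃ hH hW⟩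
  have hEval (v : Fin 7 → TRing) : D ∣ eval v (Sgen H Xp Y Z W N₁ N₂ N₃) := by
    simpa using map_dvd (eval v) hD
  obtain ⟨hHZ, hWN₃⟩ := dvd_and_dvd_of_forall_dvd_sub_sq_mul fun δ =>
    eval_Sgen_c₁_k₂ H Xp Y Z W N₁ N₂ N₃ δ ▸ hEval _
  obtain ⟨hHY, hWN₂⟩ := dvd_and_dvd_of_forall_dvd_sub_sq_mul fun δ =>
    eval_Sgen_c₁_k₃ H Xp Y Z W N₁ N₂ N₃ δ ▸ hEval _
  obtain ⟨hHX, hWN₁⟩ := dvd_and_dvd_of_forall_dvd_sub_sq_mul fun δ =>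
    eval_Sgen_c₂_k₃ H Xp Y Z W N₁ N₂ N₃ δ ▸ hEval _
  have hW : D ∣ W ^ 2 :=
    dvd_of_forall_dvd_mul_pow (a := ![N₁, N₂, N₃]) (fun e he => hN e (he 0) (he 1) (he 2)) 2
      (by simp [Fin.forall_fin_succ, hWN₁, hWN₂, hWN₃])
  refine ⟨dvd_of_forall_dvd_mul_pow (a := ![Xp, Y, Z, W])
    (fun e he => hXYZW e (he 0) (he 1) (he 2) (he 3)) 2 ?_, hW⟩
  simp [Fin.forall_fin_succ, hHX, hHY, hHZ, hW.mul_left H]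
end

section
/- Let Σ ⊂ ℂ³ be the irreducible surface defined by f, and suppose that for every regular point y of Σ the gradient ∇f(y) is parallel to y (i.e. every point of Σ is 'perpendicular to the origin'). If Σ is not normal-isotropic (i.e. the hodograph h = f₁²+f₂²+f₃² does not vanish identically on Σ), then Σ is a sphere centered at the origin: there exists c ∈ ℂ^× such that y₁²+y₂²+y₃² = c on Σ. -/
/-!
The polynomials `∂ᵢf Xⱼ - ∂ⱼf Xᵢ` vanish on `Σ` (at singular points trivially), so by the
Nullstellensatz they are multiples of `f`, and by degree constant multiples `aᵢⱼ f`. The cyclic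
identity `Xₖ (∂ᵢf Xⱼ - ∂ⱼf Xᵢ) + Xᵢ (∂ⱼf Xₖ - ∂ₖf Xⱼ) + Xⱼ (∂ₖf Xᵢ - ∂ᵢf Xₖ) = 0` then forces
`aᵢⱼ = 0`, i.e. `∇f ∥ X` identically. Then `∂ᵢf = Xᵢ g` with again `∇g ∥ X`, and
induction on the degree gives `f = P(X₀² + X₁² + X₂²)` for a one-variable `P`. Over `ℂ`,
irreducibility leaves `f = α (∑ Xᵢ² - c)`; then `∇f = 2α X`, so the hodograph is `4α² c` on `Σ`,
whence `c ≠ 0`.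
-/

open MvPolynomial

theorem Polynomial.exists_derivative_eq {K : Type*} [Field K] [CharZero K]
    (Q : Polynomial K) : ∃ P, Polynomial.derivative P = Q := by
  refine ⟨Q.sum fun n a => Polynomial.C (a / (n + 1)) * Polynomial.X ^ (n + 1), ?_⟩
  conv_rhs => rw [Q.as_sum_support_C_mul_X_pow]
  rw [Polynomial.sum, map_sum]
  refine Finset.sum_congr rfl fun n _ => ?_
  rw [Polynomial.derivative_C_mul_X_pow, Nat.add_sub_cancel, Nat.cast_add_one,
    div_mul_cancel₀ _ (Nat.cast_add_one_ne_zero n)]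

namespace MvPolynomial

section CommSemiring

variable {σ R : Type*} [CommSemiring R]

theorem pderiv_pderiv_comm (i j : σ) (p : MvPolynomial σ R) :
    pderiv i (pderiv j p) = pderiv j (pderiv i p) := by
  induction p using MvPolynomial.induction_on with
  | C a => simp
  | add p q hp hq => simp [hp, hq]
  | mul_X p n hp =>
    have hX : ∀ k l, pderiv k (pderiv l (X n : MvPolynomial σ R)) = 0 := by
      classical
      intro k l
      rw [pderiv_X]
      rcases eq_or_ne l n with rfl | hne <;> simp [*]
    simp only [pderiv_mul, map_add, hX, hp]
    ring

theorem totalDegree_pderiv_lt {i : σ} {p : MvPolynomial σ R} (h : pderiv i p ≠ 0) :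
    (pderiv i p).totalDegree < p.totalDegree := by
  obtain ⟨m, hm, hdeg⟩ := Finset.exists_mem_eq_sup _ (support_nonempty.2 h)
    fun m : σ →₀ ℕ => m.sum fun _ e => e
  rw [totalDegree, hdeg]
  have hcoeff : coeff (m + Finsupp.single i 1) p ≠ 0 := by
    rw [mem_support_iff, coeff_pderiv] at hm
    exact left_ne_zero_of_mul hm
  calc (m.sum fun _ e => e) < (m + Finsupp.single i 1).sum fun _ e => e := by
        rw [Finsupp.sum_add_index' (fun _ => rfl) (fun _ _ _ => rfl)]; simp
    _ ≤ p.totalDegree := le_totalDegree (mem_support_iff.2 hcoeff)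

theorem eq_C_of_forall_pderiv_eq_zero [NoZeroDivisors R] [CharZero R] {p : MvPolynomial σ R}
    (h : ∀ i, pderiv i p = 0) : p = C (coeff 0 p) := by
  classical
  ext m
  rw [coeff_C]
  split_ifs with hm
  · rw [hm]
  obtain ⟨i, hi⟩ : ∃ i, m i ≠ 0 := by
    by_contra! hc
    exact hm (Finsupp.ext fun j => (hc j).symm)
  have hle : Finsupp.single i 1 ≤ m := Finsupp.single_le_iff.2 (Nat.one_le_iff_ne_zero.2 hi)
  have key := coeff_pderiv (i := i) p (m - Finsupp.single i 1)
  rw [h i, tsub_add_cancel_of_le hle, coeff_zero] at key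
  exact (mul_eq_zero.1 key.symm).resolve_right (Nat.cast_add_one_ne_zero _)

theorem exists_eq_C_mul_of_dvd_of_totalDegree_le [NoZeroDivisors R] {f g : MvPolynomial σ R}
    (hf : f ≠ 0) (hdvd : f ∣ g) (hdeg : g.totalDegree ≤ f.totalDegree) : ∃ a, g = C a * f := by
  obtain ⟨q, rfl⟩ := hdvd
  rcases eq_or_ne q 0 with rfl | hq
  · exact ⟨0, by simp⟩
  rw [totalDegree_mul_of_isDomain hf hq] at hdeg
  exact ⟨coeff 0 q, by rw [mul_comm, ← totalDegree_eq_zero_iff_eq_C.1 (by omega)]⟩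

end CommSemiring

section SumSq

variable {σ R : Type*} [Fintype σ] [CommSemiring R]

variable (σ R) in
noncomputable def sumSqX : MvPolynomial σ R := ∑ i, X i ^ 2

@[simp]
theorem eval_sumSqX (y : σ → R) : eval y (sumSqX σ R) = ∑ i, y i ^ 2 := by
  simp [sumSqX]

theorem pderiv_sumSqX (i : σ) : pderiv i (sumSqX σ R) = 2 * X i := by
  classical
  simp [sumSqX, pderiv_X, Pi.single_apply]

theorem pderiv_aeval_sumSqX (i : σ) (P : Polynomial R) :
    pderiv i (Polynomial.aeval (sumSqX σ R) P) =
      2 * X i * Polynomial.aeval (sumSqX σ R) (Polynomial.derivative P) := by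
  rw [Derivation.map_aeval, pderiv_sumSqX, smul_eq_mul, mul_comm]

end SumSq

section RadialGradient

variable {σ R : Type*} [CommRing R]

def HasRadialGradient (p : MvPolynomial σ R) : Prop :=
  ∀ i j, pderiv i p * X j = pderiv j p * X i

theorem hasRadialGradient_of_pderiv_eq_X_mul {p g : MvPolynomial σ R}
    (hg : ∀ i, pderiv i p = X i * g) : HasRadialGradient g := by
  intro i j
  rcases eq_or_ne i j with rfl | hij
  · rfl
  have hcomm := pderiv_pderiv_comm j i p
  rw [hg i, hg j, pderiv_mul, pderiv_mul, pderiv_X_of_ne hij, pderiv_X_of_ne hij.symm] at hcomm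
  linear_combination -hcomm

theorem HasRadialGradient.exists_pderiv_eq_X_mul [IsDomain R] [Nontrivial σ]
    {p : MvPolynomial σ R} (h : HasRadialGradient p) : ∃ g, ∀ i, pderiv i p = X i * g := by
  have hdvd : ∀ i, X i ∣ pderiv i p := by
    intro i
    obtain ⟨j, hji⟩ := exists_ne i
    have : X i ∣ pderiv i p * X j := ⟨pderiv j p, by rw [h i j, mul_comm]⟩
    exact (X_prime.dvd_or_dvd this).resolve_right fun hij => hji (X_dvd_X.1 hij).symm
  choose g hg using hdvd
  obtain ⟨i₀⟩ := (inferInstance : Nonempty σ)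
  refine ⟨g i₀, fun i => ?_⟩
  have hi := h i i₀
  rw [hg i, hg i₀] at hi
  rw [hg i]
  congr 1
  exact mul_left_cancel₀ (mul_ne_zero (X_ne_zero i) (X_ne_zero i₀)) (by linear_combination hi)

theorem HasRadialGradient.exists_eq_aeval_sumSqX {K : Type*} [Field K] [CharZero K]
    [Fintype σ] [Nontrivial σ] {p : MvPolynomial σ K} (h : HasRadialGradient p) :
    ∃ P : Polynomial K, p = Polynomial.aeval (sumSqX σ K) P := by
  induction hn : p.totalDegree using Nat.strong_induction_on generalizing p with
  | _ n ih =>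
  rcases em (∀ i, pderiv i p = 0) with hconst | hconst
  · exact ⟨Polynomial.C (coeff 0 p), by
      rw [Polynomial.aeval_C, algebraMap_eq, ← eq_C_of_forall_pderiv_eq_zero hconst]⟩
  obtain ⟨i, hi⟩ := not_forall.1 hconst
  obtain ⟨g, hg⟩ := h.exists_pderiv_eq_X_mul
  have hg0 : g ≠ 0 := by rintro rfl; exact hi (by rw [hg i, mul_zero])
  have hdeg : g.totalDegree < n := by
    have := totalDegree_pderiv_lt hi
    rw [hg i, totalDegree_mul_of_isDomain (X_ne_zero i) hg0, totalDegree_X] at this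
    omega
  obtain ⟨Q, hQ⟩ := ih _ hdeg (hasRadialGradient_of_pderiv_eq_X_mul hg) rfl
  obtain ⟨P, hP⟩ := Polynomial.exists_derivative_eq (Polynomial.C (2⁻¹ : K) * Q)
  have hrest : ∀ j, pderiv j (p - Polynomial.aeval (sumSqX σ K) P) = 0 := by
    intro j
    rw [map_sub, pderiv_aeval_sumSqX, hP, hg j, hQ, map_mul, Polynomial.aeval_C, algebraMap_eq]
    have h2 : (2 : MvPolynomial σ K) * C 2⁻¹ = 1 := by
      rw [← map_ofNat C 2, ← C_mul, mul_inv_cancel₀ two_ne_zero, C_1]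
    linear_combination -(X j * Polynomial.aeval (sumSqX σ K) Q) * h2
  refine ⟨P + Polynomial.C (coeff 0 (p - Polynomial.aeval (sumSqX σ K) P)), ?_⟩
  rw [map_add, Polynomial.aeval_C, algebraMap_eq, ← eq_C_of_forall_pderiv_eq_zero hrest]
  ring

theorem HasRadialGradient.of_forall_dvd [IsDomain R] {f : MvPolynomial (Fin 3) R} (hf : f ≠ 0)
    (hdvd : ∀ i j, f ∣ pderiv i f * X j - pderiv j f * X i) : HasRadialGradient f := by
  have hdeg : ∀ i j, (pderiv i f * X j).totalDegree ≤ f.totalDegree := by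
    intro i j
    rcases eq_or_ne (pderiv i f) 0 with h0 | h0
    · simp [h0]
    rw [totalDegree_mul_of_isDomain h0 (X_ne_zero j), totalDegree_X]
    exact totalDegree_pderiv_lt h0
  choose a ha using fun i j => exists_eq_C_mul_of_dvd_of_totalDegree_le hf (hdvd i j)
    ((totalDegree_sub _ _).trans (max_le (hdeg i j) (hdeg j i)))
  intro i j
  obtain ⟨k, hki, hkj⟩ : ∃ k, k ≠ i ∧ k ≠ j := by revert i j; decide
  have hform : C (a i j) * X k + C (a j k) * X i + C (a k i) * X j = 0 := by
    refine (mul_eq_zero.1 ?_).resolve_right hf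
    linear_combination -(X k * ha i j + X i * ha j k + X j * ha k i)
  have haij : a i j = 0 := by
    simpa [hki.symm, hkj.symm] using congrArg (eval (Pi.single k 1)) hform
  rw [← sub_eq_zero, ha i j, haij, map_zero, zero_mul]

end RadialGradient

section IsAlgClosed

variable {σ K : Type*} [Field K] [IsAlgClosed K]

theorem dvd_of_forall_eval_eq_zero [Finite σ] {f g : MvPolynomial σ K} (hf : Prime f)
    (h : ∀ y, eval y f = 0 → eval y g = 0) : f ∣ g := by
  have : (Ideal.span {f}).IsPrime := (Ideal.span_singleton_prime hf.ne_zero).2 hf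
  rw [← Ideal.mem_span_singleton, ← IsPrime.vanishingIdeal_zeroLocus (Ideal.span {f}) (K := K),
    mem_vanishingIdeal_iff]
  exact fun y hy => h y (hy f (Ideal.subset_span rfl))

theorem exists_eq_C_mul_sumSqX_sub_C [Fintype σ] [Nonempty σ] {P : Polynomial K}
    (hP : Irreducible (Polynomial.aeval (sumSqX σ K) P)) :
    ∃ α c, α ≠ 0 ∧ Polynomial.aeval (sumSqX σ K) P = C α * (sumSqX σ K - C c) := by
  have hdeg : P.degree ≠ 0 := by
    intro h
    rw [Polynomial.eq_C_of_degree_eq_zero h, Polynomial.aeval_C, algebraMap_eq] at hP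
    exact hP.not_isUnit ((isUnit_iff_ne_zero.2 (by simpa using hP.ne_zero)).map C)
  obtain ⟨c, hc⟩ := IsAlgClosed.exists_root P hdeg
  obtain ⟨R, rfl⟩ := Polynomial.dvd_iff_isRoot.2 hc
  have hfac : Polynomial.aeval (sumSqX σ K) ((Polynomial.X - Polynomial.C c) * R) =
      (sumSqX σ K - C c) * Polynomial.aeval (sumSqX σ K) R := by
    simp [algebraMap_eq]
  have hnotUnit : ¬ IsUnit (sumSqX σ K - C c) := by
    classical
    obtain ⟨i⟩ := (inferInstance : Nonempty σ)
    obtain ⟨z, hz⟩ := IsAlgClosed.exists_pow_nat_eq c two_pos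
    intro hu
    simpa [Pi.single_apply, hz] using hu.map (eval (Pi.single i z))
  rw [hfac] at hP ⊢
  obtain ⟨α, hα, hR⟩ :=
    isUnit_iff_eq_C_of_isReduced.1 ((hP.isUnit_or_isUnit rfl).resolve_left hnotUnit)
  exact ⟨α, c, hα.ne_zero, by rw [hR, mul_comm]⟩

end IsAlgClosed

end MvPolynomial

/-- Let `Σ ⊂ ℂ³` be the irreducible surface defined by `f`, and
suppose that at every regular point `y` of `Σ` the gradient `∇f(y)` is parallel
to `y`.  If `Σ` is not normal-isotropic (the hodograph `h = f₁²+f₂²+f₃²` does not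
vanish identically on `Σ`), then `Σ` is a sphere centered at the origin: there is
`c ∈ ℂ^×` with `y₁²+y₂²+y₃² = c` on `Σ`. -/
theorem surface_with_normals_through_origin_is_sphere
    (f : MvPolynomial (Fin 3) ℂ) (hf : Irreducible f)
    (hpar : ∀ y : Fin 3 → ℂ, eval y f = 0 →
      (∃ i : Fin 3, eval y (pderiv i f) ≠ 0) →
      ∀ i j : Fin 3, eval y (pderiv i f) * y j - eval y (pderiv j f) * y i = 0)
    (hiso : ∃ y : Fin 3 → ℂ, eval y f = 0 ∧
      (eval y (pderiv 0 f)) ^ 2 + (eval y (pderiv 1 f)) ^ 2 + (eval y (pderiv 2 f)) ^ 2 ≠ 0) :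
    ∃ c : ℂ, c ≠ 0 ∧ ∀ y : Fin 3 → ℂ, eval y f = 0 →
      y 0 ^ 2 + y 1 ^ 2 + y 2 ^ 2 = c := by
  have hrad : HasRadialGradient f := .of_forall_dvd hf.ne_zero fun i j =>
    dvd_of_forall_eval_eq_zero hf.prime fun y hy => by
      rcases em (∃ k, eval y (pderiv k f) ≠ 0) with hreg | hsing
      · simpa using hpar y hy hreg i j
      · simp only [not_exists, not_not] at hsing
        simp [hsing]
  obtain ⟨P, rfl⟩ := hrad.exists_eq_aeval_sumSqX
  obtain ⟨α, c, hα, hfac⟩ := exists_eq_C_mul_sumSqX_sub_C hf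
  rw [hfac] at hiso ⊢
  have hsphere : ∀ y : Fin 3 → ℂ, eval y (C α * (sumSqX (Fin 3) ℂ - C c)) = 0 →
      y 0 ^ 2 + y 1 ^ 2 + y 2 ^ 2 = c := by
    intro y hy
    simpa [Fin.sum_univ_three, hα, sub_eq_zero] using hy
  refine ⟨c, fun hc => ?_, hsphere⟩
  obtain ⟨y, hy, hh⟩ := hiso
  apply hh
  have hgrad : ∀ i, eval y (pderiv i (C α * (sumSqX (Fin 3) ℂ - C c))) = 2 * α * y i := by
    intro i
    simp only [pderiv_C_mul, map_sub, pderiv_sumSqX, pderiv_C, sub_zero, map_mul, eval_C,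
      eval_ofNat, eval_X]
    ring
  rw [hgrad, hgrad, hgrad]
  linear_combination (4 * α ^ 2) * (hsphere y hy).trans hc
end

section
/- Let R ∈ ℂ[c₁,…,c_m][t₁,t₂] and write R = Cont_c(R)·PP_c(R), where Cont_c(R) ∈ ℂ[t₁,t₂] is the content with respect to c and PP_c(R) is the primitive part. Suppose PP_c(R), viewed in ℂ[t₁,t₂][c], has more than one nonzero coefficient M₁,…,M_ρ and is primitive with respect to c, and suppose these coefficients are all homogeneous in (t₁,t₂) of the same degree. Then, whenever the gcd chain Γⱼ = gcd(M_j, Γ_{j-1}) first reaches 1 at an index j⁰ > 1, the resultant Res_{t₁}(M_{j⁰}, Γ_{j⁰-1}) has the form t₂^p·Φ, where Φ is free of t₂ and not identically zero. -/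
open Polynomial

/-- The resultant with respect to `t₁` of two polynomials in `ℂ[t₁,t₂]`,
an element of `ℂ[t₂]`. -/
noncomputable def resT1 (P Q : MvPolynomial (Fin 2) ℂ) : MvPolynomial (Fin 1) ℂ :=
  _root_.resultant (MvPolynomial.finSuccEquiv ℂ 1 P) (MvPolynomial.finSuccEquiv ℂ 1 Q)

/-- `g` is a gcd of `a` and `b`. -/
def IsGCDof {R : Type*} [CommMonoidWithZero R] (a b g : R) : Prop :=
  g ∣ a ∧ g ∣ b ∧ ∀ D : R, D ∣ a → D ∣ b → D ∣ g

lemma rowPoly (F : Polynomial ℂ) (d o N : ℕ) (hd : F.natDegree ≤ d) (hoN : o + d < N) :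
    (X : ℂ[X]) ^ (N - 1 - d - o) * F =
      ∑ j : Fin N, C (if o ≤ (j:ℕ) ∧ (j:ℕ) ≤ o + d then F.coeff (d + o - j) else 0)
        * X ^ (N - 1 - (j:ℕ)) := by
  ext k
  rw [finset_sum_coeff, mul_comm ((X:ℂ[X]) ^ _) F, coeff_mul_X_pow']
  simp only [coeff_C_mul, coeff_X_pow, mul_ite, mul_one, mul_zero]
  rw [Fin.sum_univ_eq_sum_range
    (fun j => if k = N - 1 - j then (if o ≤ j ∧ j ≤ o + d then F.coeff (d + o - j) else 0) else 0)]
  by_cases hk : k < N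
  · rw [Finset.sum_eq_single_of_mem (N - 1 - k) (Finset.mem_range.2 (by omega))]
    · rw [if_pos (show k = N - 1 - (N - 1 - k) by omega)]
      by_cases h1 : N - 1 - d - o ≤ k
      · by_cases h2 : k ≤ N - 1 - o
        · rw [if_pos h1, if_pos (show o ≤ N - 1 - k ∧ N - 1 - k ≤ o + d by omega)]
          congr 1
          omega
        · rw [if_pos h1, if_neg (show ¬(o ≤ N - 1 - k ∧ N - 1 - k ≤ o + d) by omega),
            Polynomial.coeff_eq_zero_of_natDegree_lt (by omega)]
      · rw [if_neg h1, if_neg (show ¬(o ≤ N - 1 - k ∧ N - 1 - k ≤ o + d) by omega)]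
    · intro b hb hbne
      rw [if_neg (by simp only [Finset.mem_range] at hb; omega)]
  · rw [Finset.sum_eq_zero, if_pos (show N - 1 - d - o ≤ k by omega),
      Polynomial.coeff_eq_zero_of_natDegree_lt (by omega)]
    intro b hb
    rw [if_neg (by simp only [Finset.mem_range] at hb; omega)]

lemma det_ne_zero_core (F G : Polynomial ℂ) (nf ng : ℕ)
    (hF : F.natDegree = nf) (hG : G.natDegree = ng) (hF0 : F ≠ 0) (hG0 : G ≠ 0)
    (hcop : ∀ α : ℂ, ¬ (F.eval α = 0 ∧ G.eval α = 0)) :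
    (Matrix.of fun i j : Fin (nf + ng) =>
      if (i : ℕ) < ng then
        (if (i:ℕ) ≤ (j:ℕ) ∧ (j:ℕ) ≤ (i:ℕ) + nf then F.coeff (nf + (i:ℕ) - (j:ℕ)) else 0)
      else
        (if (i:ℕ) - ng ≤ (j:ℕ) ∧ (j:ℕ) ≤ ((i:ℕ) - ng) + ng then
          G.coeff (ng + ((i:ℕ) - ng) - (j:ℕ)) else 0)).det ≠ 0 := by
  intro hdet
  obtain ⟨c, hc0, hc⟩ := Matrix.exists_vecMul_eq_zero_iff.2 hdet
  have hN : True := trivial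
  set u : ℂ[X] := ∑ i : Fin (nf + ng), C (if (i:ℕ) < ng then c i else 0) * X ^ (ng - 1 - (i:ℕ)) with hu
  set v : ℂ[X] := ∑ i : Fin (nf + ng), C (if (i:ℕ) < ng then 0 else c i) * X ^ (nf + ng - 1 - (i:ℕ)) with hv
  have row : ∀ i : Fin (nf + ng),
      C (if (i:ℕ) < ng then c i else 0) * X ^ (ng - 1 - (i:ℕ)) * F
      + C (if (i:ℕ) < ng then 0 else c i) * X ^ (nf + ng - 1 - (i:ℕ)) * G
      = ∑ j : Fin (nf + ng), C (c i *
          (if (i : ℕ) < ng then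
            (if (i:ℕ) ≤ (j:ℕ) ∧ (j:ℕ) ≤ (i:ℕ) + nf then F.coeff (nf + (i:ℕ) - (j:ℕ)) else 0)
          else
            (if (i:ℕ) - ng ≤ (j:ℕ) ∧ (j:ℕ) ≤ ((i:ℕ) - ng) + ng then
              G.coeff (ng + ((i:ℕ) - ng) - (j:ℕ)) else 0))) * X ^ (nf + ng - 1 - (j:ℕ)) := by
    intro i
    by_cases hi : (i:ℕ) < ng
    · simp only [if_pos hi, map_zero, zero_mul, add_zero]
      have e1 : ng - 1 - (i:ℕ) = nf + ng - 1 - nf - (i:ℕ) := by omega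
      rw [e1, mul_assoc, rowPoly F nf (i:ℕ) (nf + ng) (le_of_eq hF) (by omega), Finset.mul_sum]
      refine Finset.sum_congr rfl fun j _ => ?_
      rw [← mul_assoc, ← map_mul]
    · simp only [if_neg hi, map_zero, zero_mul, zero_add]
      have e2 : nf + ng - 1 - (i:ℕ) = nf + ng - 1 - ng - ((i:ℕ) - ng) := by omega
      rw [e2, mul_assoc, rowPoly G ng ((i:ℕ) - ng) (nf + ng) (le_of_eq hG) (by omega), Finset.mul_sum]
      refine Finset.sum_congr rfl fun j _ => ?_
      rw [← mul_assoc, ← map_mul]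
  have key : u * F + v * G = 0 := by
    rw [hu, hv, Finset.sum_mul, Finset.sum_mul, ← Finset.sum_add_distrib]
    calc _ = ∑ i : Fin (nf + ng), ∑ j : Fin (nf + ng), C (c i *
          (if (i : ℕ) < ng then
            (if (i:ℕ) ≤ (j:ℕ) ∧ (j:ℕ) ≤ (i:ℕ) + nf then F.coeff (nf + (i:ℕ) - (j:ℕ)) else 0)
          else
            (if (i:ℕ) - ng ≤ (j:ℕ) ∧ (j:ℕ) ≤ ((i:ℕ) - ng) + ng then
              G.coeff (ng + ((i:ℕ) - ng) - (j:ℕ)) else 0))) * X ^ (nf + ng - 1 - (j:ℕ)) :=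
        Finset.sum_congr rfl fun i _ => row i
      _ = ∑ j : Fin (nf + ng), (∑ i : Fin (nf + ng), C (c i *
          (if (i : ℕ) < ng then
            (if (i:ℕ) ≤ (j:ℕ) ∧ (j:ℕ) ≤ (i:ℕ) + nf then F.coeff (nf + (i:ℕ) - (j:ℕ)) else 0)
          else
            (if (i:ℕ) - ng ≤ (j:ℕ) ∧ (j:ℕ) ≤ ((i:ℕ) - ng) + ng then
              G.coeff (ng + ((i:ℕ) - ng) - (j:ℕ)) else 0)))) * X ^ (nf + ng - 1 - (j:ℕ)) := by
        rw [Finset.sum_comm]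
        exact Finset.sum_congr rfl fun j _ => (Finset.sum_mul _ _ _).symm
      _ = 0 := by
        refine Finset.sum_eq_zero fun j _ => ?_
        have hj := congrFun hc j
        simp only [Matrix.vecMul, dotProduct, Pi.zero_apply, Matrix.of_apply] at hj
        rw [← map_sum, hj, map_zero, zero_mul]
  have hcu : ∀ i : Fin (nf + ng), (i:ℕ) < ng → u.coeff (ng - 1 - (i:ℕ)) = c i := by
    intro i hi
    rw [hu, finset_sum_coeff, Finset.sum_eq_single_of_mem i (Finset.mem_univ i)]
    · rw [coeff_C_mul, coeff_X_pow, if_pos rfl, if_pos hi, mul_one]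
    · intro b _ hbne
      rw [coeff_C_mul, coeff_X_pow]
      by_cases hb : (b:ℕ) < ng
      · rw [if_neg (show ¬((ng - 1 - (i:ℕ)) = ng - 1 - (b:ℕ)) from
          fun h => hbne (Fin.ext (show (b:ℕ) = (i:ℕ) by omega))), mul_zero]
      · rw [if_neg hb, zero_mul]
  have hcv : ∀ i : Fin (nf + ng), ¬ ((i:ℕ) < ng) → v.coeff (nf + ng - 1 - (i:ℕ)) = c i := by
    intro i hi
    rw [hv, finset_sum_coeff, Finset.sum_eq_single_of_mem i (Finset.mem_univ i)]
    · rw [coeff_C_mul, coeff_X_pow, if_pos rfl, if_neg hi, mul_one]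
    · intro b _ hbne
      rw [coeff_C_mul, coeff_X_pow]
      by_cases hb : (b:ℕ) < ng
      · rw [if_pos hb, zero_mul]
      · rw [if_neg (show ¬((nf + ng - 1 - (i:ℕ)) = nf + ng - 1 - (b:ℕ)) from
          fun h => hbne (Fin.ext (show (b:ℕ) = (i:ℕ) by
            have := b.isLt; have := i.isLt; omega))), mul_zero]
  have hne : u ≠ 0 ∨ v ≠ 0 := by
    by_contra h
    push_neg at h
    apply hc0
    funext i
    by_cases hi : (i:ℕ) < ng
    · have h2 := hcu i hi
      rw [h.1] at h2
      simpa using h2.symm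
    · have h2 := hcv i hi
      rw [h.2] at h2
      simpa using h2.symm
  have hvnf : nf = 0 → v = 0 := by
    intro h0
    rw [hv]
    refine Finset.sum_eq_zero fun i _ => ?_
    rw [if_pos (show (i:ℕ) < ng by have := i.isLt; omega), map_zero, zero_mul]
  have hcoprime : IsCoprime F G := by
    classical
    by_contra hnc
    have h1 : ¬ IsUnit (EuclideanDomain.gcd F G) :=
      fun hgu => hnc ((EuclideanDomain.gcd_isUnit_iff).1 hgu)
    have h2 : (EuclideanDomain.gcd F G).degree ≠ 0 :=
      fun h => h1 (Polynomial.isUnit_iff_degree_eq_zero.2 h)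
    obtain ⟨α, hα⟩ := Complex.isAlgClosed.exists_root _ h2
    have hα' : (EuclideanDomain.gcd F G).eval α = 0 := hα
    refine hcop α ⟨?_, ?_⟩
    · obtain ⟨w, hw⟩ := EuclideanDomain.gcd_dvd_left F G
      rw [hw, eval_mul, hα', zero_mul]
    · obtain ⟨w, hw⟩ := EuclideanDomain.gcd_dvd_right F G
      rw [hw, eval_mul, hα', zero_mul]
  by_cases hv0 : v = 0
  · have h3 : u * F = 0 := by
      rw [hv0, zero_mul, add_zero] at key
      exact key
    rcases mul_eq_zero.1 h3 with h4 | h4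
    · rcases hne with h5 | h5
      · exact h5 h4
      · exact h5 hv0
    · exact hF0 h4
  · have hFv : F ∣ v := hcoprime.dvd_of_dvd_mul_right ⟨-u, by linear_combination key⟩
    have hnf1 : 1 ≤ nf := by
      by_contra h
      exact hv0 (hvnf (by omega))
    have hdv : v.natDegree ≤ nf - 1 := by
      rw [hv]
      refine natDegree_sum_le_of_forall_le _ _ fun i _ => ?_
      by_cases hi : (i:ℕ) < ng
      · rw [if_pos hi, map_zero, zero_mul, natDegree_zero]
        omega
      · exact (natDegree_C_mul_X_pow_le _ _).trans (by have := i.isLt; omega)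
    have h6 := Polynomial.natDegree_le_of_dvd hFv hv0
    rw [hF] at h6
    omega

lemma weight_cons (k : ℕ) (m : Fin 1 →₀ ℕ) :
    (Finsupp.weight (1 : Fin 2 → ℕ)) (Finsupp.cons k m) = k + m 0 := by
  rw [Finsupp.weight_apply, Finsupp.sum_fintype _ _ (by simp)]
  rw [Fin.sum_univ_two]
  rw [show ((1 : Fin 2) : Fin 2) = Fin.succ 0 from rfl, Finsupp.cons_succ, Finsupp.cons_zero]
  simp

lemma fin1_eq_single (d : Fin 1 →₀ ℕ) : d = Finsupp.single 0 (d 0) := by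
  apply Finsupp.ext
  intro i
  rw [Subsingleton.elim i 0]
  simp

lemma coeff_finSuccEquiv_zero_of_gt {A : MvPolynomial (Fin 2) ℂ} {n : ℕ}
    (hA : A.IsHomogeneous n) {k : ℕ} (hk : n < k) :
    (MvPolynomial.finSuccEquiv ℂ 1 A).coeff k = 0 := by
  apply MvPolynomial.ext
  intro d
  rw [MvPolynomial.coeff_zero]
  by_contra hne
  rw [MvPolynomial.finSuccEquiv_coeff_coeff] at hne
  have h2 := hA hne
  rw [weight_cons] at h2
  omega

lemma coeff_finSuccEquiv_form {A : MvPolynomial (Fin 2) ℂ} {n : ℕ}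
    (hA : A.IsHomogeneous n) (k : ℕ) :
    ∃ c : ℂ, (MvPolynomial.finSuccEquiv ℂ 1 A).coeff k
      = MvPolynomial.C c * MvPolynomial.X 0 ^ (n - k) := by
  by_cases hk : n < k
  · exact ⟨0, by rw [coeff_finSuccEquiv_zero_of_gt hA hk, map_zero, zero_mul]⟩
  set q := (MvPolynomial.finSuccEquiv ℂ 1 A).coeff k with hq
  refine ⟨MvPolynomial.coeff (Finsupp.single 0 (n - k)) q, ?_⟩
  have hsup : q.support ⊆ {Finsupp.single 0 (n - k)} := by
    intro d hd
    rw [Finset.mem_singleton]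
    have hne := MvPolynomial.mem_support_iff.1 hd
    rw [hq, MvPolynomial.finSuccEquiv_coeff_coeff] at hne
    have h2 := hA hne
    rw [weight_cons] at h2
    rw [fin1_eq_single d]
    congr 1
    omega
  have hmon : q = MvPolynomial.monomial (Finsupp.single 0 (n - k))
      (MvPolynomial.coeff (Finsupp.single 0 (n - k)) q) := by
    conv_lhs => rw [← MvPolynomial.support_sum_monomial_coeff q]
    rw [Finset.sum_subset hsup (fun x _ hx => by
      rw [MvPolynomial.notMem_support_iff.1 hx, map_zero]), Finset.sum_singleton]
  conv_lhs => rw [hmon, MvPolynomial.monomial_eq]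
  congr 1
  exact Finsupp.prod_single_index (pow_zero _)

lemma finSuccEquiv_linear (γ : ℂ) :
    MvPolynomial.finSuccEquiv ℂ 1 (MvPolynomial.X 0 - MvPolynomial.C γ * MvPolynomial.X 1) =
      Polynomial.X - Polynomial.C (MvPolynomial.C γ * MvPolynomial.X 0) := by
  rw [map_sub, map_mul, MvPolynomial.finSuccEquiv_X_zero]
  congr 1
  rw [show (MvPolynomial.X 1 : MvPolynomial (Fin 2) ℂ) = MvPolynomial.X (Fin.succ 0) from rfl,
    MvPolynomial.finSuccEquiv_X_succ]
  rw [show (MvPolynomial.C γ : MvPolynomial (Fin 2) ℂ)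
      = algebraMap ℂ (MvPolynomial (Fin 2) ℂ) γ from rfl, AlgEquiv.commutes]
  simp [Polynomial.algebraMap_apply, MvPolynomial.algebraMap_eq]

lemma not_unit_linear (γ : ℂ) :
    ¬ IsUnit (MvPolynomial.X 0 - MvPolynomial.C γ * MvPolynomial.X 1 :
      MvPolynomial (Fin 2) ℂ) := by
  intro h
  have h2 : IsUnit (Polynomial.X - Polynomial.C (MvPolynomial.C γ * MvPolynomial.X 0) :
      Polynomial (MvPolynomial (Fin 1) ℂ)) := by
    rw [← finSuccEquiv_linear]
    exact h.map _
  have h3 := Polynomial.natDegree_eq_zero_of_isUnit h2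
  rw [Polynomial.natDegree_X_sub_C] at h3
  exact one_ne_zero h3

lemma linear_dvd_of_root {A : MvPolynomial (Fin 2) ℂ} {n : ℕ} (hA : A.IsHomogeneous n)
    {α β : ℂ} (hβ : β ≠ 0)
    (hroot : Polynomial.eval α (Polynomial.map (MvPolynomial.eval (fun _ : Fin 1 => β))
        (MvPolynomial.finSuccEquiv ℂ 1 A)) = 0) :
    (MvPolynomial.X 0 - MvPolynomial.C (α/β) * MvPolynomial.X 1 :
      MvPolynomial (Fin 2) ℂ) ∣ A := by
  set γ := α / β with hγ
  set f := MvPolynomial.finSuccEquiv ℂ 1 A with hf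
  set a : MvPolynomial (Fin 1) ℂ := MvPolynomial.C γ * MvPolynomial.X 0 with ha
  have hform : ∃ s : ℂ, f.eval a = MvPolynomial.C s * MvPolynomial.X 0 ^ n := by
    rw [Polynomial.eval_eq_sum, Polynomial.sum_def]
    apply Finset.sum_induction _ (fun x => ∃ s, x = MvPolynomial.C s * MvPolynomial.X 0 ^ n)
    · rintro x y ⟨s, rfl⟩ ⟨t, rfl⟩
      exact ⟨s + t, by rw [map_add, add_mul]⟩
    · exact ⟨0, by rw [map_zero, zero_mul]⟩
    · intro e he
      have hen : e ≤ n := by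
        by_contra hc
        exact (Polynomial.mem_support_iff.1 he) (coeff_finSuccEquiv_zero_of_gt hA (by omega))
      obtain ⟨ce, hce⟩ := coeff_finSuccEquiv_form hA e
      refine ⟨ce * γ ^ e, ?_⟩
      rw [hce]
      trans (MvPolynomial.C ce * MvPolynomial.C (γ ^ e))
          * (MvPolynomial.X 0 ^ (n - e) * MvPolynomial.X 0 ^ e)
      · rw [mul_pow, ← map_pow]
        ring
      · rw [← map_mul, ← pow_add, show n - e + e = n from by omega]
  obtain ⟨s, hs⟩ := hform
  have hevala : (MvPolynomial.eval (fun _ : Fin 1 => β)) a = α := by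
    rw [ha]
    simp [hγ, div_mul_cancel₀ _ hβ]
  have heval : (MvPolynomial.eval (fun _ : Fin 1 => β)) (f.eval a) = 0 := by
    rw [← Polynomial.eval₂_hom (MvPolynomial.eval (fun _ : Fin 1 => β)) a,
      ← Polynomial.eval_map, hevala]
    exact hroot
  rw [hs] at heval
  simp only [map_mul, MvPolynomial.eval_C, map_pow, MvPolynomial.eval_X] at heval
  have hs0 : s = 0 := by
    rcases mul_eq_zero.1 heval with h | h
    · exact h
    · exact absurd h (pow_ne_zero _ hβ)
  have hfa : f.eval a = 0 := by rw [hs, hs0, map_zero, zero_mul]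
  have hdvd : Polynomial.X - Polynomial.C a ∣ f := Polynomial.dvd_iff_isRoot.2 hfa
  rw [ha, ← finSuccEquiv_linear γ] at hdvd
  obtain ⟨w, hw⟩ := hdvd
  refine ⟨(MvPolynomial.finSuccEquiv ℂ 1).symm w, ?_⟩
  apply (MvPolynomial.finSuccEquiv ℂ 1).injective
  rw [map_mul, AlgEquiv.apply_symm_apply]
  exact hw

lemma lead_eval_ne {A : MvPolynomial (Fin 2) ℂ} {n : ℕ} (hA : A.IsHomogeneous n)
    (hA0 : A ≠ 0) {β : ℂ} (hβ : β ≠ 0) :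
    MvPolynomial.eval (fun _ : Fin 1 => β)
      ((MvPolynomial.finSuccEquiv ℂ 1 A).leadingCoeff) ≠ 0 := by
  have hf0 : MvPolynomial.finSuccEquiv ℂ 1 A ≠ 0 := by
    intro h
    exact hA0 ((map_eq_zero_iff _ (AlgEquiv.injective _)).1 h)
  obtain ⟨c, hc⟩ := coeff_finSuccEquiv_form hA (MvPolynomial.finSuccEquiv ℂ 1 A).natDegree
  have hcne : c ≠ 0 := by
    intro h
    apply Polynomial.leadingCoeff_ne_zero.2 hf0
    rw [Polynomial.leadingCoeff, hc, h, map_zero, zero_mul]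
  rw [Polynomial.leadingCoeff, hc]
  simp only [map_mul, MvPolynomial.eval_C, map_pow, MvPolynomial.eval_X]
  exact mul_ne_zero hcne (pow_ne_zero _ hβ)

lemma mv1_monomial (D : MvPolynomial (Fin 1) ℂ)
    (h : ∀ β : ℂ, β ≠ 0 → MvPolynomial.eval (fun _ : Fin 1 => β) D ≠ 0) :
    ∃ (p : ℕ) (Φ : ℂ), Φ ≠ 0 ∧ D = MvPolynomial.X 0 ^ p * MvPolynomial.C Φ := by
  set T : MvPolynomial (Fin 1) ℂ →ₐ[ℂ] Polynomial ℂ :=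
    MvPolynomial.aeval (fun _ => Polynomial.X) with hT
  set S : Polynomial ℂ →ₐ[ℂ] MvPolynomial (Fin 1) ℂ :=
    Polynomial.aeval (MvPolynomial.X 0) with hS
  have hST : ∀ z, S (T z) = z := by
    intro z
    have hcomp : S.comp T = AlgHom.id ℂ _ := by
      apply MvPolynomial.algHom_ext
      intro i
      rw [Subsingleton.elim i 0]
      simp [hS, hT]
    calc S (T z) = (S.comp T) z := rfl
      _ = z := by rw [hcomp]; rfl
  have hevalT : ∀ β : ℂ, (T D).eval β = MvPolynomial.eval (fun _ : Fin 1 => β) D := by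
    intro β
    have hcomp : ((Polynomial.aeval β : Polynomial ℂ →ₐ[ℂ] ℂ).comp T)
        = MvPolynomial.aeval (fun _ : Fin 1 => β) := by
      apply MvPolynomial.algHom_ext
      intro i
      simp [hT]
    calc (T D).eval β = ((Polynomial.aeval β : Polynomial ℂ →ₐ[ℂ] ℂ).comp T) D := by
          simp [Polynomial.coe_aeval_eq_eval]
      _ = MvPolynomial.aeval (fun _ : Fin 1 => β) D := by rw [hcomp]
      _ = MvPolynomial.eval (fun _ : Fin 1 => β) D := by
          rw [← MvPolynomial.coe_aeval_eq_eval]; rfl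
  set q := T D with hq
  have hq0 : q ≠ 0 := by
    intro hz
    apply h 1 one_ne_zero
    rw [← hevalT 1, hz, Polynomial.eval_zero]
  have hsplit := Polynomial.Splits.eq_prod_roots (IsAlgClosed.splits q)
  have hroots : ∀ r ∈ q.roots, r = 0 := by
    intro r hr
    by_contra hrne
    exact h r hrne (by rw [← hevalT r]; exact Polynomial.isRoot_of_mem_roots hr)
  have hprod : (q.roots.map fun a => Polynomial.X - Polynomial.C a)
      = Multiset.replicate (Multiset.card q.roots) (Polynomial.X : ℂ[X]) := by
    calc (q.roots.map fun a => Polynomial.X - Polynomial.C a)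
        = q.roots.map (fun _ => Polynomial.X) :=
          Multiset.map_congr rfl (fun x hx => by rw [hroots x hx, map_zero, sub_zero])
      _ = Multiset.replicate (Multiset.card q.roots) (Polynomial.X : ℂ[X]) :=
          Multiset.map_const' _ _
  rw [hprod, Multiset.prod_replicate] at hsplit
  have hDS : D = S q := (hST D).symm
  have hfin : D = MvPolynomial.X 0 ^ (Multiset.card q.roots)
      * MvPolynomial.C q.leadingCoeff := by
    conv_lhs => rw [hDS, hsplit]
    rw [map_mul, map_pow,
      show S (Polynomial.C q.leadingCoeff) = MvPolynomial.C q.leadingCoeff from by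
        simp [hS, MvPolynomial.algebraMap_eq],
      show S Polynomial.X = MvPolynomial.X 0 from by simp [hS]]
    ring
  exact ⟨Multiset.card q.roots, q.leadingCoeff, Polynomial.leadingCoeff_ne_zero.2 hq0, hfin⟩

-- key evaluation lemma
lemma resT1_eval_ne_zero {A B : MvPolynomial (Fin 2) ℂ} {n m : ℕ}
    (hA : A.IsHomogeneous n) (hB : B.IsHomogeneous m) (hA0 : A ≠ 0) (hB0 : B ≠ 0)
    (hDunit : ∀ D : MvPolynomial (Fin 2) ℂ, D ∣ A → D ∣ B → IsUnit D)
    {β : ℂ} (hβ : β ≠ 0) :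
    MvPolynomial.eval (fun _ : Fin 1 => β) (resT1 A B) ≠ 0 := by
  set φ : MvPolynomial (Fin 1) ℂ →+* ℂ := MvPolynomial.eval (fun _ : Fin 1 => β) with hφ
  set f := MvPolynomial.finSuccEquiv ℂ 1 A with hfd
  set g := MvPolynomial.finSuccEquiv ℂ 1 B with hgd
  have hf0 : f ≠ 0 := fun h => hA0 ((map_eq_zero_iff _ (AlgEquiv.injective _)).1 h)
  have hg0 : g ≠ 0 := fun h => hB0 ((map_eq_zero_iff _ (AlgEquiv.injective _)).1 h)
  have hleadf : φ f.leadingCoeff ≠ 0 := lead_eval_ne hA hA0 hβ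
  have hleadg : φ g.leadingCoeff ≠ 0 := lead_eval_ne hB hB0 hβ
  have hF : (f.map φ).natDegree = f.natDegree :=
    Polynomial.natDegree_map_of_leadingCoeff_ne_zero φ hleadf
  have hG : (g.map φ).natDegree = g.natDegree :=
    Polynomial.natDegree_map_of_leadingCoeff_ne_zero φ hleadg
  have hF0 : f.map φ ≠ 0 := by
    intro h
    apply hleadf
    rw [Polynomial.leadingCoeff, ← Polynomial.coeff_map, h, Polynomial.coeff_zero]
  have hG0 : g.map φ ≠ 0 := by
    intro h
    apply hleadg
    rw [Polynomial.leadingCoeff, ← Polynomial.coeff_map, h, Polynomial.coeff_zero]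
  have hcop : ∀ α : ℂ, ¬ ((f.map φ).eval α = 0 ∧ (g.map φ).eval α = 0) := by
    rintro α ⟨h1, h2⟩
    have hdA := linear_dvd_of_root hA hβ h1
    have hdB := linear_dvd_of_root hB hβ h2
    exact not_unit_linear (α / β) (hDunit _ hdA hdB)
  have hmain := det_ne_zero_core (f.map φ) (g.map φ) f.natDegree g.natDegree hF hG hF0 hG0 hcop
  rw [resT1, _root_.resultant, RingHom.map_det]
  convert hmain using 2
  ext i j
  simp only [sylvesterMatrix, RingHom.mapMatrix_apply, Matrix.map_apply, Matrix.of_apply,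
    apply_ite φ, map_zero, Polynomial.coeff_map]
  rfl

/-- Let `P = PP_c(R)` be the primitive part (with respect to the
variables `c`) of a polynomial `R ∈ ℂ[c][t₁,t₂]`, having more than one nonzero
coefficient, whose nonzero `c`-coefficients `M₁,…,M_ρ` are homogeneous in `(t₁,t₂)`
of the same degree.  Form the gcd chain `Γ₁ = M₁`, `Γⱼ = gcd(Mⱼ, Γ_{j-1})`, and let
`j⁰ > 1` be the first index where `Γ_{j⁰}` is a unit.  Then the resultant
`Res_{t₁}(M_{j⁰}, Γ_{j⁰-1})` has the form `t₂^p · Φ` with `Φ` a nonzero constant. -/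
theorem gcd_chain_resultant_monomial (mc ρ : ℕ) (hρ : 1 < ρ)
    (P : MvPolynomial (Fin mc) (MvPolynomial (Fin 2) ℂ))
    (M : Fin ρ → MvPolynomial (Fin 2) ℂ)
    (hM0 : ∀ j, M j ≠ 0)
    (hMc : ∀ j, ∃ e : Fin mc →₀ ℕ, MvPolynomial.coeff e P = M j)
    (hMall : ∀ e ∈ P.support, ∃ j, M j = MvPolynomial.coeff e P)
    (hcard : 1 < P.support.card)
    (n : ℕ) (hhom : ∀ j, (M j).IsHomogeneous n)
    (hprim : ∀ D : MvPolynomial (Fin 2) ℂ,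
      (∀ e : Fin mc →₀ ℕ, D ∣ MvPolynomial.coeff e P) → IsUnit D)
    (Γ : Fin ρ → MvPolynomial (Fin 2) ℂ)
    (hΓ0 : Γ ⟨0, by omega⟩ = M ⟨0, by omega⟩)
    (hΓgcd : ∀ j : ℕ, ∀ hj : j + 1 < ρ,
      IsGCDof (M ⟨j + 1, hj⟩) (Γ ⟨j, by omega⟩) (Γ ⟨j + 1, hj⟩))
    (hΓhom : ∀ j, ∃ nj, (Γ j).IsHomogeneous nj)
    (j0 : Fin ρ) (hj0pos : 0 < (j0 : ℕ))
    (hunit : IsUnit (Γ j0))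
    (hfirst : ∀ j : Fin ρ, (j : ℕ) < (j0 : ℕ) → ¬ IsUnit (Γ j)) :
    ∃ (p : ℕ) (Φ : ℂ), Φ ≠ 0 ∧
      resT1 (M j0) (Γ ⟨(j0 : ℕ) - 1, lt_of_le_of_lt (Nat.sub_le _ _) j0.isLt⟩) =
        MvPolynomial.X 0 ^ p * MvPolynomial.C Φ := by
  have hk1 : (j0 : ℕ) - 1 + 1 < ρ := by
    have := j0.isLt
    omega
  have hgcd := hΓgcd ((j0 : ℕ) - 1) hk1
  have hjeq : (⟨(j0 : ℕ) - 1 + 1, hk1⟩ : Fin ρ) = j0 := Fin.ext (by simp; omega)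
  rw [hjeq] at hgcd
  set A := M j0 with hAdef
  set B := Γ ⟨(j0 : ℕ) - 1, lt_of_le_of_lt (Nat.sub_le _ _) j0.isLt⟩ with hBdef
  have hDunit : ∀ D : MvPolynomial (Fin 2) ℂ, D ∣ A → D ∣ B → IsUnit D := by
    intro D h1 h2
    exact isUnit_of_dvd_unit (hgcd.2.2 D h1 h2) hunit
  have hA0 : A ≠ 0 := hM0 j0
  have hΓne : ∀ j : ℕ, ∀ h : j < ρ, Γ ⟨j, h⟩ ≠ 0 := by
    intro j
    induction j with
    | zero =>
      intro h hz
      apply hM0 ⟨0, by omega⟩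
      rw [← hΓ0]
      exact hz
    | succ j ih =>
      intro h hz
      have hd := (hΓgcd j (by omega)).2.1
      apply ih (by omega)
      apply zero_dvd_iff.1
      rw [← hz]
      exact hd
  have hB0 : B ≠ 0 := hΓne _ _
  obtain ⟨m, hBhom⟩ := hΓhom ⟨(j0 : ℕ) - 1, lt_of_le_of_lt (Nat.sub_le _ _) j0.isLt⟩
  have hAhom := hhom j0
  apply mv1_monomial
  intro β hβ
  exact resT1_eval_ne_zero hAhom hBhom hA0 hB0 hDunit hβ
end
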